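/- Let u, v ∈ A*, let s be the longest suffix of v that is also a prefix of u, and write v = rs, u = st. Then u v̄ ≡ r̄ · shuffle(s, s̄) · t, where shuffle(s, s̄) = s₁s̄₁ s₂s̄₂ … sₖs̄ₖ for s = s₁…sₖ. -/

import Mathlib

/-- A basic queue action: write a letter or read a letter. -/
inductive Act (A : Type) : Type
  | wr (a : A)
  | rd (a : A)
deriving DecidableEq

variable {A : Type} [DecidableEq A]

/-- The action of words over `Act A` on queue states `A* ∪ {⊥}` (⊥ = `none`). -/
def act : Option (List A) → List (Act A) → Option (List A)
  | q, [] => q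
  | none, _ :: _ => none
  | some q, (Act.wr a) :: u => act (some (q ++ [a])) u
  | some q, (Act.rd a) :: u =>
    match q with
    | [] => none
    | b :: q' => if b = a then act (some q') u else none

/-- Two words over `Act A` are equivalent if they act identically on all queues. -/
def qequiv (u v : List (Act A)) : Prop := ∀ q : List A, act (some q) u = act (some q) v

/-- Writing the word `w`. -/
def W (w : List A) : List (Act A) := w.map Act.wr

/-- Reading the word `w` (the barred copy of `w`). -/
def R (w : List A) : List (Act A) := w.map Act.rd

/-- `shuffle s` is the word `s₁ s̄₁ s₂ s̄₂ … sₖ s̄ₖ`. -/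
def shuffle (s : List A) : List (Act A) := s.flatMap fun a => [Act.wr a, Act.rd a]

/-- The projection to write letters. -/
def prW (w : List (Act A)) : List A :=
  w.filterMap fun x => match x with | Act.wr a => some a | Act.rd _ => none

/-- The projection to read letters (with the bars removed). -/
def prR (w : List (Act A)) : List A :=
  w.filterMap fun x => match x with | Act.wr _ => none | Act.rd a => some a

theorem act_append (u v : List (Act A)) : ∀ q, act q (u ++ v) = act (act q u) v := by
  induction u with
  | nil =>
      intro q
      cases q <;> rfl
  | cons x u ih =>
      intro q
      cases q with
      | none =>
          simp only [List.cons_append, act]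
          cases v with
          | nil => rfl
          | cons _ _ => rfl
      | some q =>
          cases x with
          | wr a => simpa [act] using ih _
          | rd a =>
              cases q with
              | nil =>
                  simp only [List.cons_append, act]
                  cases v with
                  | nil => rfl
                  | cons _ _ => rfl
              | cons b q' =>
                  by_cases h : b = a
                  · simp [List.cons_append, act, h, ih]
                  · simp only [List.cons_append, act, if_neg h]
                    cases v with
                    | nil => rfl
                    | cons _ _ => rfl

/-- The setoid of queue-action equivalence. -/
def qsetoid (A : Type) [DecidableEq A] : Setoid (List (Act A)) :=
  ⟨qequiv, ⟨fun _ _ => rfl, fun h q => (h q).symm, fun h1 h2 q => (h1 q).trans (h2 q)⟩⟩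

/-- The monoid of queue actions. -/
def QAct (A : Type) [DecidableEq A] : Type := Quotient (qsetoid A)

theorem act_none : ∀ v : List (Act A), act (none : Option (List A)) v = none
  | [] => rfl
  | _ :: _ => rfl

theorem qequiv_append {u u' v v' : List (Act A)} (hu : qequiv u u') (hv : qequiv v v') :
    qequiv (u ++ v) (u' ++ v') := by
  intro q
  rw [act_append, act_append, hu q]
  cases h : act (some q) u' with
  | none => rw [act_none, act_none]
  | some q' => exact hv q'

instance : Monoid (QAct A) where
  mul := Quotient.map₂ (· ++ ·) (fun _ _ hu _ _ hv => qequiv_append hu hv)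
  one := Quotient.mk (qsetoid A) []
  mul_assoc := by
    rintro ⟨u⟩ ⟨v⟩ ⟨w⟩
    exact congrArg (Quotient.mk (qsetoid A)) (List.append_assoc u v w)
  one_mul := by
    rintro ⟨u⟩
    rfl
  mul_one := by
    rintro ⟨u⟩
    exact congrArg (Quotient.mk (qsetoid A)) (List.append_nil u)

/-- The class of a word in the monoid of queue actions. -/
def cls (w : List (Act A)) : QAct A := Quotient.mk (qsetoid A) w

theorem cls_mul (u v : List (Act A)) : cls u * cls v = cls (u ++ v) := rfl

/-! Started on a queue `q`, the word `u v̄` writes `s ++ t` and then reads `r ++ s`. This read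
consumes `r` from `q` itself: otherwise `r = q ++ m` with `m ≠ []`, and `m ++ s` would be a longer
suffix of `r ++ s` that is a prefix of `s ++ t`. Once `r` has been read from `q`, the remaining read
`s̄` only touches letters already in the queue before `t` is written, so `t` can be moved to the end,
and `s s̄ ≡ shuffle(s, s̄)` on any queue. -/

theorem List.prefix_of_append_prefix_of_maximal {α : Type*} {r s t q : List α}
    (hmax : ∀ s' : List α, s' <:+ r ++ s → s' <+: s ++ t → s'.length ≤ s.length)
    (h : r ++ s <+: q ++ (s ++ t)) : r <+: q := by
  rcases List.prefix_or_prefix_of_prefix ((List.prefix_append r s).trans h)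
    (List.prefix_append q (s ++ t)) with hrq | ⟨m, rfl⟩
  · exact hrq
  · have hms : m ++ s <+: s ++ t := by
      simpa only [List.append_assoc, List.prefix_append_right_inj] using h
    have hlen := hmax (m ++ s) ⟨q, by simp⟩ hms
    rw [List.length_append] at hlen
    rw [List.eq_nil_of_length_eq_zero (by omega : m.length = 0), List.append_nil]

theorem R_append {α : Type} (v w : List α) : R (v ++ w) = R v ++ R w := List.map_append

theorem act_W (w : List A) : ∀ o, act o (W w) = o.map (· ++ w) := by
  induction w with
  | nil => intro o; cases o <;> simp [W, act]
  | cons a w ih =>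
      rintro (_ | q)
      · exact act_none _
      · simpa [W, act] using ih (some (q ++ [a]))

theorem act_some_R (w : List A) : ∀ q, act (some q) (R w) =
    if w <+: q then some (q.drop w.length) else none := by
  induction w with
  | nil => intro q; simp [R, act]
  | cons a w ih =>
      rintro (_ | ⟨b, q⟩)
      · simp [R, act]
      · by_cases h : b = a
        · subst h
          simpa [R, act] using ih q
        · simp [R, act, h, Ne.symm h]

theorem act_some_append_R (w q : List A) : act (some (w ++ q)) (R w) = some q := by
  simp [act_some_R]

theorem act_some_append_R_of_length_le {p w s : List A} (hs : s.length ≤ p.length) :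
    act (some (p ++ w)) (R s) = (act (some p) (R s)).map (· ++ w) := by
  have hpre : s <+: p ++ w ↔ s <+: p :=
    ⟨fun h => List.prefix_of_prefix_length_le h (List.prefix_append p w) hs,
      fun h => h.trans (List.prefix_append p w)⟩
  by_cases h : s <+: p <;> simp [act_some_R, hpre, h, List.drop_append_of_le_length hs]

theorem act_some_shuffle (s : List A) : ∀ p, act (some p) (shuffle s) = act (some (p ++ s)) (R s) := by
  induction s with
  | nil => intro p; simp [shuffle, R, act]
  | cons a s ih =>
      rintro (_ | ⟨b, p⟩)
      · simpa [shuffle, R, act] using ih []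
      · by_cases h : b = a
        · simpa [shuffle, R, act, h] using ih (p ++ [a])
        · simp [shuffle, R, act, h]

theorem stmt10_general (u v r s t : List A)
    (hv : v = r ++ s) (hu : u = s ++ t)
    (hmax : ∀ s' : List A, s' <:+ v → s' <+: u → s'.length ≤ s.length) :
    qequiv (W u ++ R v) (R r ++ shuffle s ++ W t) := by
  subst hv hu
  intro q
  by_cases hr : r <+: q
  · obtain ⟨q', rfl⟩ := hr
    have hs : s.length ≤ (q' ++ s).length := by simp
    calc act (some (r ++ q')) (W (s ++ t) ++ R (r ++ s))
        = act (some (q' ++ s ++ t)) (R s) := by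
          simp only [act_append, act_W, Option.map_some, R_append, List.append_assoc,
            act_some_append_R]
      _ = act (act (act (some (r ++ q')) (R r)) (shuffle s)) (W t) := by
          rw [act_some_append_R_of_length_le hs, act_some_append_R, act_some_shuffle, act_W]
      _ = act (some (r ++ q')) (R r ++ shuffle s ++ W t) := by rw [act_append, act_append]
  · have hrs : ¬ r ++ s <+: q ++ (s ++ t) :=
      fun h => hr (List.prefix_of_append_prefix_of_maximal hmax h)
    rw [act_append, act_append, act_append, act_W, Option.map_some, act_some_R, if_neg hrs,
      act_some_R, if_neg hr, act_none, act_none]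

/-- If `s` is the longest suffix of `v` that is also a prefix of `u`, with `v = r s` and
`u = s t`, then `u v̄ ≡ r̄ · shuffle(s, s̄) · t`. -/
theorem stmt10 [Fintype A] [Nontrivial A] (u v r s t : List A)
    (hv : v = r ++ s) (hu : u = s ++ t)
    (hmax : ∀ s' : List A, s' <:+ v → s' <+: u → s'.length ≤ s.length) :
    qequiv (W u ++ R v) (R r ++ shuffle s ++ W t) :=
  stmt10_general u v r s t hv hu hmax
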